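/- arXiv:1505.05206 — 2 statements merged into one kernel-verified Lean document; each statement's English description precedes it below -/
import Mathlib

section
/- Let F, G, J be integers with 0 ≤ G ≤ F and 0 ≤ J ≤ F. Then (−1)^J · C(F−J, G−1) · C(F, J−1) = ∑_{m=J}^{F−G+1} (−1)^m · C(F−J+m, G−J+m) · C(F−G+1, m). -/
/-- The generalized binomial coefficient `C(x, k)` for integers `x, k`:
`x(x-1)⋯(x-k+1)/k!` when `k ≥ 0` and `0` when `k < 0`. -/
noncomputable def zchoose (x k : ℤ) : ℤ := if 0 ≤ k then Ring.choose x k.toNat else 0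

/-!
Hold `p = F - J` and `q = G - J` fixed and let `J` vary: the left-hand side becomes
`L(J) = (-1)^J C(p, q + J - 1) C(p + J, J - 1)`, and `L(m) - L(m + 1)` is exactly the `m`-th
summand. This follows from Pascal's rule and trinomial revision
`C(x, k) C(x - k, m) = C(x, m) C(x - m, k)`, both valid for all integer arguments. The sum
therefore telescopes to `L(J) - L(F - G + 2)`, and the last term vanishes because it contains
`C(p, p + 1) = 0`.
-/

theorem Int.sum_Icc_sub' {M : Type*} [AddCommGroup M] (f : ℤ → M) {a b : ℤ}
    (hab : a ≤ b + 1) : ∑ m ∈ Finset.Icc a b, (f m - f (m + 1)) = f a - f (b + 1) := by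
  replace hab : a - 1 ≤ b := by omega
  induction b, hab using Int.leInduction with
  | base => simp
  | succ b hab ih =>
    rw [← Finset.insert_Icc_right_eq_Icc_add_one (by omega), Finset.sum_insert (by simp), ih]
    abel

theorem zchoose_of_neg (x : ℤ) {k : ℤ} (hk : k < 0) : zchoose x k = 0 := by
  simp [zchoose, hk.not_ge]

theorem zchoose_natCast (x : ℤ) (k : ℕ) : zchoose x k = Ring.choose x k := by
  simp [zchoose]

theorem zchoose_eq_zero_of_lt {x k : ℤ} (hx : 0 ≤ x) (hxk : x < k) : zchoose x k = 0 := by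
  lift x to ℕ using hx
  lift k to ℕ using by omega
  rw [zchoose_natCast, Ring.choose_natCast, Nat.choose_eq_zero_of_lt (by omega), Nat.cast_zero]

theorem zchoose_add_one_add_one (x k : ℤ) :
    zchoose (x + 1) (k + 1) = zchoose x k + zchoose x (k + 1) := by
  rcases lt_trichotomy k (-1) with hk | rfl | hk
  · simp [zchoose_of_neg _ (show k < 0 by omega), zchoose_of_neg _ (show k + 1 < 0 by omega)]
  · simp [zchoose]
  · lift k to ℕ using by omega
    exact_mod_cast Ring.choose_succ_succ x k

theorem zchoose_mul_zchoose_sub_comm (x k m : ℤ) :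
    zchoose x k * zchoose (x - k) m = zchoose x m * zchoose (x - m) k := by
  rcases lt_or_ge k 0 with hk | hk
  · simp [zchoose_of_neg _ hk]
  rcases lt_or_ge m 0 with hm | hm
  · simp [zchoose_of_neg _ hm]
  lift k to ℕ using hk
  lift m to ℕ using hm
  simp only [zchoose_natCast]
  have hk := Ring.choose_smul_choose x (Nat.le_add_right k m)
  have hm := Ring.choose_smul_choose x (Nat.le_add_left m k)
  rw [Nat.add_sub_cancel_left] at hk
  rw [Nat.add_sub_cancel, ← Nat.choose_symm_add] at hm
  rw [← hk, ← hm]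

theorem zchoose_add_mul_zchoose_sub_add_one (p q m : ℤ) :
    zchoose (p + m) (q + m) * zchoose (p - q + 1) m =
      zchoose p (q + m - 1) * zchoose (p + m) (m - 1)
        + zchoose p (q + m) * zchoose (p + m + 1) m := by
  have pascal (x k : ℤ) : zchoose (x + 1) k = zchoose x (k - 1) + zchoose x k := by
    simpa using zchoose_add_one_add_one x (k - 1)
  have revision (k : ℤ) : zchoose (p + m) (q + m) * zchoose (p - q) k
      = zchoose (p + m) k * zchoose (p + m - k) (q + m) := by
    simpa [show p + m - (q + m) = p - q by ring] using
      zchoose_mul_zchoose_sub_comm (p + m) (q + m) k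
  have h₁ := revision m
  have h₂ := revision (m - 1)
  rw [show p + m - m = p by ring] at h₁
  rw [show p + m - (m - 1) = p + 1 by ring, pascal p] at h₂
  rw [pascal (p - q), pascal (p + m) m]
  linear_combination h₁ + h₂

theorem binomial_identity_23_8_1_general (F G J : ℤ) (hJF : J ≤ F) :
    (J.negOnePow : ℤ) * zchoose (F - J) (G - 1) * zchoose F (J - 1)
      = ∑ m ∈ Finset.Icc J (F - G + 1),
          (m.negOnePow : ℤ) * zchoose (F - J + m) (G - J + m) * zchoose (F - G + 1) m := by
  set L : ℤ → ℤ := fun m ↦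
    m.negOnePow * zchoose (F - J) (G - J + m - 1) * zchoose (F - J + m) (m - 1) with hL
  have hterm (m : ℤ) :
      (m.negOnePow : ℤ) * zchoose (F - J + m) (G - J + m) * zchoose (F - G + 1) m
        = L m - L (m + 1) := by
    have h := zchoose_add_mul_zchoose_sub_add_one (F - J) (G - J) m
    rw [show F - J - (G - J) + 1 = F - G + 1 by ring] at h
    simp only [hL, Int.negOnePow_succ, Units.val_neg, ← add_assoc, add_sub_cancel_right]
    linear_combination (m.negOnePow : ℤ) * h
  rcases le_or_gt J (F - G + 1 + 1) with hJ | hJ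
  · rw [Finset.sum_congr rfl fun m _ ↦ hterm m, Int.sum_Icc_sub' L hJ]
    have hL_top : L (F - G + 1 + 1) = 0 := by
      simp only [hL]
      rw [zchoose_eq_zero_of_lt (by omega) (by omega), mul_zero, zero_mul]
    rw [hL_top, sub_zero]
    simp only [hL, sub_add_cancel]
  · rw [Finset.Icc_eq_empty (by omega), Finset.sum_empty,
      zchoose_eq_zero_of_lt (by omega) (by omega), mul_zero, zero_mul]

/-- For integers `F, G, J` with `0 ≤ G ≤ F` and `0 ≤ J ≤ F`,
`(−1)^J · C(F−J, G−1) · C(F, J−1)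
  = ∑_{m=J}^{F−G+1} (−1)^m · C(F−J+m, G−J+m) · C(F−G+1, m)`. -/
theorem binomial_identity_23_8_1 (F G J : ℤ) (hG0 : 0 ≤ G) (hGF : G ≤ F)
    (hJ0 : 0 ≤ J) (hJF : J ≤ F) :
    (J.negOnePow : ℤ) * zchoose (F - J) (G - 1) * zchoose F (J - 1)
      = ∑ m ∈ Finset.Icc J (F - G + 1),
          (m.negOnePow : ℤ) * zchoose (F - J + m) (G - J + m) * zchoose (F - G + 1) m :=
  binomial_identity_23_8_1_general F G J hJF
end

section
/- Let ε, M, j be integers with 0 ≤ ε ≤ M and 0 ≤ j ≤ M. Then ∑_{J=ε}^{M} (−1)^J · C(J−1−j, J−ε) · C(M−j, J−j) = (−1)^ε. -/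
open Finset

lemma zchoose_of_nonneg (x : ℤ) {k : ℤ} (hk : 0 ≤ k) : zchoose x k = Ring.choose x k.toNat :=
  if_pos hk

lemma zchoose_natCast_s13 (n : ℕ) (k : ℤ) :
    zchoose n k = if 0 ≤ k then (n.choose k.toNat : ℤ) else 0 := by
  simp only [zchoose, Ring.choose_natCast]

lemma zchoose_neg (r : ℤ) {k : ℤ} (hk : 0 ≤ k) :
    zchoose (-r) k = k.negOnePow * zchoose (r + k - 1) k := by
  lift k to ℕ using hk
  rw [zchoose_of_nonneg _ (Int.natCast_nonneg k), zchoose_of_nonneg _ (Int.natCast_nonneg k),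
    Int.toNat_natCast, Ring.choose_neg, Units.smul_def, smul_eq_mul]

lemma zchoose_symm {n : ℤ} (hn : 0 ≤ n) (k : ℤ) : zchoose n (n - k) = zchoose n k := by
  lift n to ℕ using hn
  rw [zchoose_natCast_s13, zchoose_natCast_s13]
  by_cases hk : 0 ≤ k ∧ k ≤ n
  · rw [if_pos (by omega), if_pos hk.1, show (n - k : ℤ).toNat = n - k.toNat by omega,
      Nat.choose_symm (by omega)]
  · split_ifs with hnk hk0 hk0
    · omega
    · rw [Nat.choose_eq_zero_of_lt (n := n) (k := (n - k).toNat) (by omega), Nat.cast_zero]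
    · rw [Nat.choose_eq_zero_of_lt (n := n) (k := k.toNat) (by omega), Nat.cast_zero]
    · rfl

lemma zchoose_self {n : ℤ} (hn : 0 ≤ n) : zchoose n n = 1 := by
  lift n to ℕ using hn
  rw [zchoose_natCast_s13, if_pos (Int.natCast_nonneg n), Int.toNat_natCast, Nat.choose_self,
    Nat.cast_one]

lemma sum_Icc_zchoose_mul_zchoose (r s : ℤ) {a b : ℤ} (hab : a ≤ b) :
    ∑ J ∈ Icc a b, zchoose r (J - a) * zchoose s (b - J) = zchoose (r + s) (b - a) := by
  rw [zchoose_of_nonneg _ (sub_nonneg.mpr hab), Ring.add_choose_eq _ (Commute.all r s)]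
  refine sum_nbij' (fun J => ((J - a).toNat, (b - J).toNat)) (fun ij => a + ij.1)
    ?_ ?_ ?_ ?_ ?_
  · intro J hJ
    simp only [mem_Icc, HasAntidiagonal.mem_antidiagonal] at hJ ⊢
    omega
  · intro ij hij
    simp only [mem_Icc, HasAntidiagonal.mem_antidiagonal] at hij ⊢
    omega
  · intro J hJ
    rw [mem_Icc] at hJ
    simp only
    omega
  · rintro ⟨i, j⟩ hij
    simp only [HasAntidiagonal.mem_antidiagonal, Prod.mk.injEq] at hij ⊢
    omega
  · intro J hJ
    rw [mem_Icc] at hJ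
    rw [zchoose_of_nonneg _ (by omega), zchoose_of_nonneg _ (by omega)]

theorem xi_sign_identity_general (ε M j : ℤ) (h2 : ε ≤ M) (h4 : j ≤ M) :
    ∑ J ∈ Finset.Icc ε M,
        (J.negOnePow : ℤ) * zchoose (J - 1 - j) (J - ε) * zchoose (M - j) (J - j)
      = (ε.negOnePow : ℤ) := by
  have hterm : ∀ J ∈ Icc ε M,
      (J.negOnePow : ℤ) * zchoose (J - 1 - j) (J - ε) * zchoose (M - j) (J - j)
        = ε.negOnePow * (zchoose (j - ε) (J - ε) * zchoose (M - j) (M - J)) := by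
    intro J hJ
    rw [mem_Icc] at hJ
    have hsign : J.negOnePow * (J - ε).negOnePow = ε.negOnePow := by
      rw [← Int.negOnePow_add, show J + (J - ε) = 2 * (J - ε) + ε by ring, Int.negOnePow_add,
        Int.negOnePow_two_mul, one_mul]
    rw [show J - 1 - j = -(j + 1 - J) by ring, zchoose_neg _ (by omega : 0 ≤ J - ε),
      show j + 1 - J + (J - ε) - 1 = j - ε by ring, ← zchoose_symm (by omega : 0 ≤ M - j) (J - j),
      show M - j - (J - j) = M - J by ring, ← hsign, Units.val_mul]
    ring
  rw [sum_congr rfl hterm, ← mul_sum, sum_Icc_zchoose_mul_zchoose _ _ h2,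
    show j - ε + (M - j) = M - ε by ring, zchoose_self (by omega), mul_one]

/-- For integers `ε, M, j` with `0 ≤ ε ≤ M` and `0 ≤ j ≤ M`,
`∑_{J=ε}^{M} (−1)^J · C(J−1−j, J−ε) · C(M−j, J−j) = (−1)^ε`. -/
theorem xi_sign_identity (ε M j : ℤ) (h1 : 0 ≤ ε) (h2 : ε ≤ M) (h3 : 0 ≤ j) (h4 : j ≤ M) :
    ∑ J ∈ Finset.Icc ε M,
        (J.negOnePow : ℤ) * zchoose (J - 1 - j) (J - ε) * zchoose (M - j) (J - j)
      = (ε.negOnePow : ℤ) :=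
  xi_sign_identity_general ε M j h2 h4
end
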